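/- arXiv:1302.2442 — 5 statements merged into one kernel-verified Lean document; each statement's English description precedes it below -/
import Mathlib

section
/- Let G : Δop → Set be a functor (a simplicial set) and D a category with products. For a cosimplicial object X in D and a simplicial set K, define (X^K)^n = ∏_{K_n} X^n with the induced cosimplicial structure. If a coaugmentation ε : c(A) → X of a cosimplicial object X admits an extra degeneracy, then ε is a cosimplicial homotopy equivalence, where cosimplicial homotopies are defined via the path object X^{Δ[1]}. -/
open CategoryTheory CategoryTheory.Limits Simplicial Opposite

universe v u

noncomputable section

variable {D : Type u} [Category.{v} D] [HasProducts.{0} D]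

/-- The coaction of simplicial sets on cosimplicial objects: `(X^K)^n = ∏_{K_n} X^n`. -/
def pow (K : SSet.{0}) (X : CosimplicialObject D) : CosimplicialObject D where
  obj n := ∏ᶜ fun _ : K.obj (op n) => X.obj n
  map {n m} α := Pi.lift fun k => Pi.π _ (K.map α.op k) ≫ X.map α
  map_id n := by
    ext k
    simp [X.map_id]
  map_comp {n m l} α β := by
    ext k
    simp [FunctorToTypes.map_comp_apply, X.map_comp]

lemma const_naturality {m₁ m₂ : SimplexCategoryᵒᵖ} (f : m₁ ⟶ m₂) (n : ℕ) (k : Fin (n + 1)) :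
    Δ[n].map f (SSet.stdSimplex.const n k m₁) = SSet.stdSimplex.const n k m₂ :=
  rfl

/-- Evaluation of the path object `X^{Δ[1]}` at the vertex `i` of `Δ[1]`, i.e. the map
`X^{Δ[1]} ⟶ X` induced by `dⁱ : [0] → [1]`. -/
def ev (i : Fin 2) (X : CosimplicialObject D) : pow Δ[1] X ⟶ X where
  app n := Pi.π (fun _ : (Δ[1] : SSet.{0}).obj (op n) => X.obj n)
      (SSet.stdSimplex.const 1 i (op n))
  naturality n m α := by
    dsimp [pow]
    rw [limit.lift_π]
    rfl

/-- Cosimplicial homotopy of cosimplicial maps, defined via the path object `X^{Δ[1]}`. -/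
def CosimplicialHomotopic {Y X : CosimplicialObject D} (f g : Y ⟶ X) : Prop :=
  ∃ H : Y ⟶ pow Δ[1] X, H ≫ ev 0 X = f ∧ H ≫ ev 1 X = g

/-- An extra degeneracy for a coaugmentation `ε : c(A) ⟶ X` of a cosimplicial object:
maps `s⁻¹ : X⁰ ⟶ A` and `s⁻¹ : X^{n+1} ⟶ X^n` satisfying the cosimplicial identities. -/
structure CoExtraDegeneracy (X : CosimplicialObject D) (A : D)
    (ε : A ⟶ X.obj (SimplexCategory.mk 0)) where
  s' : X.obj (SimplexCategory.mk 0) ⟶ A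
  s : ∀ n : ℕ, X.obj (SimplexCategory.mk (n + 1)) ⟶ X.obj (SimplexCategory.mk n)
  ε_s' : ε ≫ s' = 𝟙 A
  δ₀_s : ∀ n : ℕ, X.δ (0 : Fin (n + 2)) ≫ s n = 𝟙 _
  δ₁_s₀ : X.δ (1 : Fin 2) ≫ s 0 = s' ≫ ε
  δ_s : ∀ (n : ℕ) (i : Fin (n + 2)),
    X.δ i.succ ≫ s (n + 1) = s n ≫ X.δ i
  σ_s : ∀ (n : ℕ) (j : Fin (n + 1)),
    X.σ j.succ ≫ s n = s (n + 1) ≫ X.σ j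
  σ₀_s' : X.σ (0 : Fin 1) ≫ s' = s 0 ≫ s'
  σ₀_s : ∀ n : ℕ, X.σ (0 : Fin (n + 2)) ≫ s n = s (n + 1) ≫ s n

/-!
A coaugmented cosimplicial object with extra codegeneracies is a functor on the finite ordinals
`[n]⊥ = {⊥ < 0 < ⋯ < n}` (`n ≥ -1`) and monotone maps fixing `⊥`, with `A` at `[-1]⊥ = {⊥}`;
`s` is the image of the map `[n+1]⊥ → [n]⊥` sending `0` to `⊥` and `k + 1` to `k`.
A 1-simplex `α : [n] → [1]` with `i` zeros names the endomorphism of `[n]⊥` collapsing the first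
`i` vertices onto `⊥`, and these endomorphisms commute with every map `φ` of `Δ` once `α` is
replaced by `φ ≫ α`; this is the homotopy. At `α ≡ 1` it is the identity, at `α ≡ 0` it factors
through `{⊥}`, that is, through `A`.
-/

lemma coaugmentation_comp_map {C : Type*} [Category C] {X : CosimplicialObject C} {A : C}
    (εc : (Functor.const SimplexCategory).obj A ⟶ X) {a b : SimplexCategory} (f : a ⟶ b) :
    εc.app a ≫ X.map f = εc.app b :=
  (Cone.mk A εc).w f

lemma coaugmentation_comp_δ {C : Type*} [Category C] {X : CosimplicialObject C} {A : C}
    (εc : (Functor.const SimplexCategory).obj A ⟶ X) {n : ℕ} (i : Fin (n + 2)) :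
    εc.app ⦋n⦌ ≫ X.δ i = εc.app ⦋n + 1⦌ :=
  coaugmentation_comp_map εc _

namespace SimplexCategory

lemma toMk₁_last (n : ℕ) : toMk₁ (Fin.last (n + 1)) = const ⦋n⦌ ⦋1⦌ 0 := by
  ext j : 3
  exact toMk₁_of_castSucc_lt _ _ (Fin.castSucc_lt_last j)

lemma toMk₁_zero (n : ℕ) : toMk₁ (0 : Fin (n + 2)) = const ⦋n⦌ ⦋1⦌ 1 := by
  ext j : 3
  exact toMk₁_of_le_castSucc _ _ (Fin.zero_le _)

end SimplexCategory

namespace CoExtraDegeneracy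

open SimplexCategory

variable {C : Type*} [Category C] {X : CosimplicialObject C} {A : C}
  {εc : (Functor.const SimplexCategory).obj A ⟶ X}
  (ed : CoExtraDegeneracy X A (εc.app ⦋0⦌))

def retraction (n : ℕ) : X.obj ⦋n⦌ ⟶ A :=
  match n with
  | 0 => ed.s'
  | n + 1 => ed.s n ≫ retraction n

/-- The image of the endomorphism of `[n]⊥` collapsing the first `i` vertices onto `⊥`. -/
def collapse (n i : ℕ) : X.obj ⦋n⦌ ⟶ X.obj ⦋n⦌ :=
  match n, i with
  | _, 0 => 𝟙 _
  | 0, _ + 1 => ed.s' ≫ εc.app ⦋0⦌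
  | n + 1, i + 1 => ed.s n ≫ collapse n i ≫ X.δ 0

@[simp]
lemma collapse_zero (n : ℕ) : ed.collapse n 0 = 𝟙 _ := by
  cases n <;> rfl

lemma collapse_of_le {n i : ℕ} (h : n + 1 ≤ i) :
    ed.collapse n i = ed.retraction n ≫ εc.app ⦋n⦌ := by
  induction n generalizing i with
  | zero => obtain ⟨i, rfl⟩ := Nat.exists_eq_add_of_le' h; rfl
  | succ n ih =>
    obtain ⟨i, rfl⟩ := Nat.exists_eq_add_of_le' (Nat.one_le_of_lt h)
    simp only [collapse, retraction, ih (i := i) (by omega), Category.assoc,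
      coaugmentation_comp_δ]

lemma coaugmentation_comp_retraction (n : ℕ) : εc.app ⦋n⦌ ≫ ed.retraction n = 𝟙 A := by
  induction n with
  | zero => exact ed.ε_s'
  | succ n ih =>
    rw [← coaugmentation_comp_δ εc 0, retraction, Category.assoc, reassoc_of% ed.δ₀_s n, ih]

lemma δ_comp_collapse (n i : ℕ) (j : Fin (n + 2)) :
    X.δ j ≫ ed.collapse (n + 1) i = ed.collapse n (if i ≤ j then i else i - 1) ≫ X.δ j := by
  induction n generalizing i with
  | zero =>
    rcases i with _ | i
    · simp
    obtain rfl | rfl : j = 0 ∨ j = 1 := by fin_cases j <;> simp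
    · simp [collapse, reassoc_of% ed.δ₀_s 0]
    · have hε : εc.app ⦋0⦌ ≫ ed.collapse 0 i = εc.app ⦋0⦌ := by
        cases i <;> simp [collapse, reassoc_of% ed.ε_s']
      have hidx : 1 ≤ if i + 1 ≤ ((1 : Fin 2) : ℕ) then i + 1 else i + 1 - 1 := by
        split_ifs with h <;> simp at h ⊢; omega
      rw [collapse, reassoc_of% ed.δ₁_s₀, reassoc_of% hε, ed.collapse_of_le hidx,
        Category.assoc, coaugmentation_comp_δ, coaugmentation_comp_δ]
      rfl
  | succ n ih =>
    rcases i with _ | i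
    · simp
    induction j using Fin.cases with
    | zero => simp [collapse, reassoc_of% ed.δ₀_s (n + 1)]
    | succ j =>
      have hidx : (if i + 1 ≤ (j.succ : ℕ) then i + 1 else i + 1 - 1) =
          (if i ≤ (j : ℕ) then i else i - 1) + 1 := by
        simp only [Fin.val_succ]; split_ifs <;> omega
      simp only [hidx, collapse, reassoc_of% ed.δ_s n j, reassoc_of% ih, Category.assoc,
        X.δ_comp_δ (Fin.zero_le j), Fin.castSucc_zero]

lemma σ_comp_collapse (n i : ℕ) (j : Fin (n + 1)) :
    X.σ j ≫ ed.collapse n i = ed.collapse (n + 1) (if i ≤ j then i else i + 1) ≫ X.σ j := by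
  have hδσ : ∀ {m : ℕ}, X.δ (0 : Fin (m + 2)) ≫ X.σ 0 = 𝟙 _ := X.δ_comp_σ_self' rfl
  induction n generalizing i with
  | zero =>
    rcases i with _ | i
    · simp
    obtain rfl : j = 0 := Subsingleton.elim (α := Fin 1) _ _
    simp [collapse, reassoc_of% ed.σ₀_s', hδσ]
  | succ n ih =>
    rcases i with _ | i
    · simp
    induction j using Fin.cases with
    | zero => simp [collapse, reassoc_of% ed.σ₀_s n, hδσ]
    | succ j =>
      have hidx : (if i + 1 ≤ (j.succ : ℕ) then i + 1 else i + 1 + 1) =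
          (if i ≤ (j : ℕ) then i else i + 1) + 1 := by
        simp only [Fin.val_succ]; split_ifs <;> omega
      have hσδ : X.σ j ≫ X.δ 0 = X.δ 0 ≫ X.σ j.succ :=
        (X.δ_comp_σ_of_le (i := 0) (Fin.zero_le _)).symm
      simp only [hidx, collapse, reassoc_of% ed.σ_s n j, reassoc_of% ih, hσδ, Category.assoc]

/-- `toMk₁Equiv.symm α` is the number of zeros of `α`. -/
def homotopyApp (n : SimplexCategory) (α : n ⟶ ⦋1⦌) : X.obj n ⟶ X.obj n :=
  ed.collapse n.len (toMk₁Equiv.symm α)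

lemma homotopyApp_toMk₁ {n : ℕ} (i : Fin (n + 2)) :
    ed.homotopyApp ⦋n⦌ (toMk₁ i) = ed.collapse n i := by
  simp [homotopyApp, ← toMk₁Equiv_apply]

lemma map_δ_comp_homotopyApp {n : ℕ} (j : Fin (n + 2)) (α : ⦋n + 1⦌ ⟶ ⦋1⦌) :
    X.map (δ j) ≫ ed.homotopyApp _ α = ed.homotopyApp _ (δ j ≫ α) ≫ X.map (δ j) := by
  obtain ⟨i, rfl⟩ := toMk₁_surjective α
  have key := ed.δ_comp_collapse n i j
  rcases le_or_gt i j.castSucc with hij | hij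
  · rw [δ_comp_toMk₁_of_le _ _ hij, homotopyApp_toMk₁, homotopyApp_toMk₁]
    rwa [if_pos (show (i : ℕ) ≤ j from hij)] at key
  · rw [δ_comp_toMk₁_of_lt _ _ hij, homotopyApp_toMk₁, homotopyApp_toMk₁]
    rwa [if_neg (show ¬(i : ℕ) ≤ j from hij.not_ge)] at key

lemma map_σ_comp_homotopyApp {n : ℕ} (j : Fin (n + 1)) (α : ⦋n⦌ ⟶ ⦋1⦌) :
    X.map (σ j) ≫ ed.homotopyApp _ α = ed.homotopyApp _ (σ j ≫ α) ≫ X.map (σ j) := by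
  obtain ⟨i, rfl⟩ := toMk₁_surjective α
  have key := ed.σ_comp_collapse n i j
  rcases le_or_gt i j.castSucc with hij | hij
  · rw [σ_comp_toMk₁_of_le _ _ hij, homotopyApp_toMk₁, homotopyApp_toMk₁]
    rwa [if_pos (show (i : ℕ) ≤ j from hij)] at key
  · rw [σ_comp_toMk₁_of_lt _ _ hij, homotopyApp_toMk₁, homotopyApp_toMk₁]
    rwa [if_neg (show ¬(i : ℕ) ≤ j from hij.not_ge)] at key

lemma map_comp_homotopyApp {a b : SimplexCategory} (φ : a ⟶ b) (α : b ⟶ ⦋1⦌) :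
    X.map φ ≫ ed.homotopyApp b α = ed.homotopyApp a (φ ≫ α) ≫ X.map φ := by
  let W : MorphismProperty SimplexCategory := fun a b φ =>
    ∀ α : b ⟶ ⦋1⦌, X.map φ ≫ ed.homotopyApp b α = ed.homotopyApp a (φ ≫ α) ≫ X.map φ
  have : W.IsMultiplicative :=
    { id_mem a α := by rw [X.map_id, Category.id_comp, Category.comp_id, Category.id_comp]
      comp_mem φ ψ hφ hψ α := by
        rw [X.map_comp, Category.assoc, hψ α, reassoc_of% hφ (ψ ≫ α), Category.assoc] }
  have hW : W = ⊤ := morphismProperty_eq_top W ed.map_δ_comp_homotopyApp ed.map_σ_comp_homotopyApp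
  have hφ : W φ := by rw [hW]; trivial
  exact hφ α

lemma homotopyApp_const_zero (n : SimplexCategory) :
    ed.homotopyApp n (const n ⦋1⦌ 0) = ed.retraction n.len ≫ εc.app n := by
  rw [← toMk₁_last, homotopyApp_toMk₁, Fin.val_last, ed.collapse_of_le le_rfl]

lemma homotopyApp_const_one (n : SimplexCategory) : ed.homotopyApp n (const n ⦋1⦌ 1) = 𝟙 _ := by
  rw [← toMk₁_zero, homotopyApp_toMk₁, Fin.val_zero, collapse_zero]

def retractionHom : X ⟶ (Functor.const SimplexCategory).obj A where
  app n := ed.retraction n.len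
  naturality a b φ := by
    -- naturality of the homotopy at the constant simplex `0`, cancelling the split mono `εc`
    have h := ed.map_comp_homotopyApp φ (const b ⦋1⦌ 0)
    rw [show φ ≫ const b ⦋1⦌ 0 = const a ⦋1⦌ 0 from rfl,
      homotopyApp_const_zero, homotopyApp_const_zero] at h
    calc X.map φ ≫ ed.retraction b.len
        = X.map φ ≫ ed.retraction b.len ≫ εc.app b ≫ ed.retraction b.len := by
          rw [ed.coaugmentation_comp_retraction b.len, Category.comp_id]
      _ = ed.retraction a.len ≫ εc.app a ≫ X.map φ ≫ ed.retraction b.len := by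
          rw [reassoc_of% h]
      _ = ed.retraction a.len ≫ ((Functor.const SimplexCategory).obj A).map φ := by
          rw [reassoc_of% coaugmentation_comp_map, ed.coaugmentation_comp_retraction b.len]
          rfl

lemma coaugmentation_comp_retractionHom : εc ≫ ed.retractionHom = 𝟙 _ := by
  ext n
  exact ed.coaugmentation_comp_retraction n.len

def homotopy [HasProducts.{0} C] : X ⟶ pow Δ[1] X where
  app n := Pi.lift fun α => ed.homotopyApp n (SSet.stdSimplex.objEquiv α)
  naturality a b φ := by
    dsimp only [pow]
    ext α
    simp only [Category.assoc, limit.lift_π, Fan.mk_π_app]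
    rw [← Category.assoc, limit.lift_π, Fan.mk_π_app, SSet.stdSimplex.map_apply,
      Equiv.apply_symm_apply]
    exact ed.map_comp_homotopyApp φ _

lemma homotopy_comp_ev_zero [HasProducts.{0} C] :
    ed.homotopy ≫ ev 0 X = ed.retractionHom ≫ εc := by
  ext n
  exact (limit.lift_π _ _).trans (ed.homotopyApp_const_zero n)

lemma homotopy_comp_ev_one [HasProducts.{0} C] : ed.homotopy ≫ ev 1 X = 𝟙 X := by
  ext n
  exact (limit.lift_π _ _).trans (ed.homotopyApp_const_one n)

end CoExtraDegeneracy

/-- if a coaugmentation `ε : c(A) ⟶ X` of a cosimplicial object (in a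
category with products) admits an extra degeneracy, then `ε` is a cosimplicial homotopy
equivalence, where cosimplicial homotopies are defined via the path object `X^{Δ[1]}`
(with `(X^K)^n = ∏_{K_n} X^n`). -/
theorem extraDegeneracy_homotopyEquiv
    (X : CosimplicialObject D) (A : D)
    (εc : (Functor.const SimplexCategory).obj A ⟶ X)
    (ed : CoExtraDegeneracy X A (εc.app (SimplexCategory.mk 0))) :
    ∃ r : X ⟶ (Functor.const SimplexCategory).obj A,
      εc ≫ r = 𝟙 ((Functor.const SimplexCategory).obj A) ∧
      CosimplicialHomotopic (r ≫ εc) (𝟙 X) :=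
  ⟨ed.retractionHom, ed.coaugmentation_comp_retractionHom,
    ed.homotopy, ed.homotopy_comp_ev_zero, ed.homotopy_comp_ev_one⟩
end
end

section
/- Let (C, S, W) be a category with two saturated classes of morphisms S ⊆ W. If w : M → N is a morphism in W between Cartan-Eilenberg fibrant objects, then w is an isomorphism in C[S⁻¹] (Whitehead's theorem for CE-categories). -/
open CategoryTheory

universe v u

/-- An object `M` is Cartan–Eilenberg fibrant (with respect to strong equivalences `S` and
weak equivalences `W`) if every weak equivalence `w : Y ⟶ X` induces a unique-lifting
property against morphisms `Y ⟶ M` of the localized category `C[S⁻¹]`. -/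
def CEFibrant {C : Type u} [Category.{v} C] (S W : MorphismProperty C) (M : C) : Prop :=
  ∀ ⦃Y X : C⦄ (w : Y ⟶ X), W w →
    ∀ f : S.Q.obj Y ⟶ S.Q.obj M, ∃! g : S.Q.obj X ⟶ S.Q.obj M, S.Q.map w ≫ g = f

/-! A retraction `g` of `w : M ⟶ N` comes from fibrancy of `M`; fibrancy of `N` says that
maps out of `N` into `N` are determined by their restriction along `w`, and both `g ≫ w`
and `𝟙 N` restrict to `w`. -/

lemma CategoryTheory.isIso_of_retraction_of_cancel {D : Type*} [Category D] {X Y : D}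
    (f : X ⟶ Y) {g : Y ⟶ X} (hfg : f ≫ g = 𝟙 X)
    (hcancel : ∀ a b : Y ⟶ Y, f ≫ a = f ≫ b → a = b) : IsIso f :=
  ⟨g, hfg, hcancel _ _ (by rw [← Category.assoc, hfg, Category.id_comp, Category.comp_id])⟩

namespace CEFibrant

variable {C : Type u} [Category.{v} C] {S W : MorphismProperty C}

lemma exists_retraction {M N : C} (hM : CEFibrant S W M) (w : M ⟶ N) (hw : W w) :
    ∃ g : S.Q.obj N ⟶ S.Q.obj M, S.Q.map w ≫ g = 𝟙 _ :=
  (hM w hw (𝟙 _)).exists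

lemma cancel_left {N Y X : C} (hN : CEFibrant S W N) (w : Y ⟶ X) (hw : W w)
    (a b : S.Q.obj X ⟶ S.Q.obj N) (h : S.Q.map w ≫ a = S.Q.map w ≫ b) : a = b :=
  (hN w hw (S.Q.map w ≫ b)).unique h rfl

end CEFibrant

theorem whitehead_CE_general
    {C : Type u} [Category.{v} C] (S W : MorphismProperty C)
    {M N : C} (hM : CEFibrant S W M) (hN : CEFibrant S W N)
    (w : M ⟶ N) (hw : W w) :
    IsIso (S.Q.map w) := by
  obtain ⟨g, hg⟩ := hM.exists_retraction w hw
  exact isIso_of_retraction_of_cancel _ hg (hN.cancel_left w hw)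

/-- Whitehead's theorem for CE-categories: if `S ⊆ W` are saturated classes
and `w : M ⟶ N` is a weak equivalence between CE-fibrant objects, then `w` becomes an
isomorphism in `C[S⁻¹]`. -/
theorem whitehead_CE
    {C : Type u} [Category.{v} C] (S W : MorphismProperty C)
    (hS : ∀ ⦃X Y : C⦄ (f : X ⟶ Y), S f ↔ IsIso (S.Q.map f))
    (hW : ∀ ⦃X Y : C⦄ (f : X ⟶ Y), W f ↔ IsIso (W.Q.map f))
    (hSW : ∀ ⦃X Y : C⦄ (f : X ⟶ Y), S f → W f)
    {M N : C} (hM : CEFibrant S W M) (hN : CEFibrant S W N)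
    (w : M ⟶ N) (hw : W w) :
    IsIso (S.Q.map w) :=
  whitehead_CE_general S W hM hN w hw
end

section
/- Let (C, S, W) be a right Cartan-Eilenberg category admitting a resolvent functor (R, ρ), i.e. R : C → C with R(X) CE-fibrant for all X and ρ : id → R a natural transformation with ρ_X ∈ W̄. Then: (a) an object X is CE-fibrant if and only if ρ_X is an isomorphism in C[S⁻¹]; (b) a morphism w lies in W̄ if and only if R(w) is an isomorphism in C[S⁻¹]. -/
/-!
A CE-fibrant object `M` is one for which the functor `Z ↦ Hom(S.Q Z, S.Q M)` inverts `W`; by the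
universal property of `C[W⁻¹]` it then inverts every `u` with `W.Q.map u` invertible. Between two
CE-fibrant objects such a `u` is therefore invertible in `C[S⁻¹]` (a Yoneda-type argument).
This gives (a), since CE-fibrancy is invariant under isomorphism in `C[S⁻¹]`, and (b), since
naturality of `ρ` makes `W.Q.map w` invertible iff `W.Q.map (R.map w)` is, and `W.Q` factors
through `S.Q`.
-/

open CategoryTheory

universe v u

namespace CategoryTheory

lemma MorphismProperty.IsInvertedBy.isIso_map {C D : Type*} [Category C] [Category D]
    {W : MorphismProperty C} {F : C ⥤ D} (hF : W.IsInvertedBy F) {X Y : C} (f : X ⟶ Y)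
    [IsIso (W.Q.map f)] : IsIso (F.map f) := by
  rw [← Localization.Construction.fac F hF]
  exact inferInstanceAs (IsIso ((Localization.Construction.lift F hF).map (W.Q.map f)))

lemma isIso_yoneda_rightOp_map_iff {D : Type*} [Category D] (A : D) {X Y : D} (φ : X ⟶ Y) :
    IsIso ((yoneda.obj A).rightOp.map φ) ↔ ∀ f : X ⟶ A, ∃! g : Y ⟶ A, φ ≫ g = f := by
  rw [Functor.rightOp_map, isIso_op_iff, isIso_iff_bijective, Function.bijective_iff_existsUnique]
  rfl

end CategoryTheory

section

variable {C : Type u} [Category.{v} C] {S W : MorphismProperty C}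

lemma ceFibrant_iff_isInvertedBy {M : C} :
    CEFibrant S W M ↔ W.IsInvertedBy (S.Q ⋙ (yoneda.obj (S.Q.obj M)).rightOp) :=
  forall₄_congr fun _ _ w _ => (isIso_yoneda_rightOp_map_iff _ (S.Q.map w)).symm

namespace CEFibrant

lemma existsUnique_of_isIso {M : C} (hM : CEFibrant S W M) {X Y : C} (u : X ⟶ Y)
    [IsIso (W.Q.map u)] (f : S.Q.obj X ⟶ S.Q.obj M) :
    ∃! g : S.Q.obj Y ⟶ S.Q.obj M, S.Q.map u ≫ g = f :=
  (isIso_yoneda_rightOp_map_iff _ _).1 ((ceFibrant_iff_isInvertedBy.1 hM).isIso_map u) f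

lemma of_iso {M N : C} (hM : CEFibrant S W M) (e : S.Q.obj N ≅ S.Q.obj M) :
    CEFibrant S W N := by
  rw [ceFibrant_iff_isInvertedBy] at hM ⊢
  refine (MorphismProperty.IsInvertedBy.iff_of_iso W (Functor.isoWhiskerLeft S.Q ?_)).1 hM
  exact NatIso.ofComponents (fun Z => ((yoneda.mapIso e).app (Opposite.op Z)).op)
    fun f => Quiver.Hom.unop_inj (by ext; simp)

lemma isIso_Q_map {A B : C} (hA : CEFibrant S W A) (hB : CEFibrant S W B) (u : A ⟶ B)
    [IsIso (W.Q.map u)] : IsIso (S.Q.map u) := by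
  obtain ⟨g, hug, -⟩ := hA.existsUnique_of_isIso u (𝟙 _)
  obtain ⟨_, -, huniq⟩ := hB.existsUnique_of_isIso u (S.Q.map u)
  refine ⟨g, hug, (huniq _ ?_).trans (huniq _ (Category.comp_id _)).symm⟩
  beta_reduce
  rw [← Category.assoc, hug, Category.id_comp]

end CEFibrant

end

theorem resolvent_functor_characterizations_general
    {C : Type u} [Category.{v} C] (S W : MorphismProperty C)
    (h : S.IsInvertedBy W.Q)
    (R : C ⥤ C) (ρ : 𝟭 C ⟶ R)
    (hfib : ∀ X : C, CEFibrant S W (R.obj X))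
    (hρ : ∀ X : C, IsIso (W.Q.map (ρ.app X))) :
    (∀ X : C, CEFibrant S W X ↔ IsIso (S.Q.map (ρ.app X))) ∧
    (∀ ⦃X Y : C⦄ (w : X ⟶ Y), IsIso (W.Q.map w) ↔ IsIso (S.Q.map (R.map w))) := by
  refine ⟨fun X => ⟨fun hX => hX.isIso_Q_map (hfib X) (ρ.app X),
    fun _ => (hfib X).of_iso (asIso (S.Q.map (ρ.app X)))⟩, fun X Y w => ?_⟩
  have e : W.Q ≅ R ⋙ W.Q := NatIso.ofComponents (fun X => asIso (W.Q.map (ρ.app X)))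
    fun f => by simpa [← Functor.map_comp] using W.Q.congr_map (ρ.naturality f)
  rw [NatIso.isIso_map_iff e w, Functor.comp_map]
  exact ⟨fun _ => (hfib X).isIso_Q_map (hfib Y) (R.map w), fun _ => h.isIso_map (R.map w)⟩

/-- in a right Cartan–Eilenberg category `(C, S, W)` (with `S ⊆ W̄`,
expressed by `h : S.IsInvertedBy W.Q`, and every object admitting a CE-fibrant model)
with a resolvent functor `(R, ρ)` (`R X` CE-fibrant for all `X` and `ρ_X ∈ W̄`), we have:
(a) `X` is CE-fibrant iff `ρ_X` is an isomorphism in `C[S⁻¹]`, and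
(b) `w ∈ W̄` iff `R(w)` is an isomorphism in `C[S⁻¹]`. -/
theorem resolvent_functor_characterizations
    {C : Type u} [Category.{v} C] (S W : MorphismProperty C)
    (h : S.IsInvertedBy W.Q)
    (hCE : ∀ X : C, ∃ (M : C) (w : S.Q.obj X ⟶ S.Q.obj M),
      CEFibrant S W M ∧ IsIso ((Localization.Construction.lift W.Q h).map w))
    (R : C ⥤ C) (ρ : 𝟭 C ⟶ R)
    (hfib : ∀ X : C, CEFibrant S W (R.obj X))
    (hρ : ∀ X : C, IsIso (W.Q.map (ρ.app X))) :
    (∀ X : C, CEFibrant S W X ↔ IsIso (S.Q.map (ρ.app X))) ∧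
    (∀ ⦃X Y : C⦄ (w : X ⟶ Y), IsIso (W.Q.map w) ↔ IsIso (S.Q.map (R.map w))) :=
  resolvent_functor_characterizations_general S W h R ρ hfib hρ
end

section
/- Let (C, S, W) be a right Cartan-Eilenberg category and F : C → D a functor sending every morphism of S to an isomorphism. Then F admits a right derived functor RF : C[W⁻¹] → D (an absolute left Kan extension of the induced functor along the localization C[S⁻¹] → C[W⁻¹]), computable on objects by RF(X) = F(M) where X → M is a CE-fibrant model of X. -/
/-!
For a CE-fibrant `M`, the comparison functor `L : C[S⁻¹] ⥤ C[W⁻¹]` is bijective on maps into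
`M`: injective because `Hom(-, M)` inverts `W` and so descends to `C[W⁻¹]`, surjective because
`C[W⁻¹]` is generated by `C` and the inverses of `W`, against which `M` has the lifting property.
Hence a fibrant model `X ⟶ M` is a couniversal arrow `L M ≅ X`, and `L` has a right adjoint `R`
with invertible unit at fibrant objects. For any adjunction `L ⊣ R`, `R ⋙ F'` is a pointwise,
hence absolute, left Kan extension of `F'` along `L`: the comma category `L ↓ Y` has the
terminal object `L (R Y) ⟶ Y`. So `RF X = F' (R X) ≅ F' M = F M`.
-/

open CategoryTheory

universe v u v' u' v'' u''

open Limits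

section Adjunction

variable {C₁ C₂ H : Type*} [Category* C₁] [Category* C₂] [Category* H] {L : C₁ ⥤ C₂}

lemma CategoryTheory.Adjunction.isLeftKanExtension_comp {R : C₂ ⥤ C₁} (adj : L ⊣ R)
    (F : C₁ ⥤ H) (α : F ⟶ L ⋙ R ⋙ F) (hα : ∀ A, α.app A = F.map (adj.unit.app A)) :
    (R ⋙ F).IsLeftKanExtension α :=
  Functor.LeftExtension.IsPointwiseLeftKanExtension.isLeftKanExtension
    (E := Functor.LeftExtension.mk (R ⋙ F) α) fun Y =>
    (colimitOfDiagramTerminal (mkTerminalOfRightAdjoint R adj Y) _).ofIsoColimit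
      (Cocone.ext (Iso.refl _) fun g => by
        change F.map (adj.homEquiv _ _ g.hom) ≫ 𝟙 _ = α.app g.left ≫ F.map (R.map g.hom)
        rw [hα, Adjunction.homEquiv_unit, F.map_comp, Category.comp_id])

lemma CategoryTheory.Adjunction.isIso_unit_app_of_bijective {R : C₂ ⥤ C₁} (adj : L ⊣ R)
    {Z : C₁} (hZ : ∀ A, Function.Bijective fun f : A ⟶ Z => L.map f) :
    IsIso (adj.unit.app Z) :=
  isIso_of_yoneda_map_bijective _ fun A => by
    change Function.Bijective fun f : A ⟶ Z => (f ≫ adj.unit.app Z : A ⟶ R.obj (L.obj Z))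
    convert (adj.homEquiv A (L.obj Z)).bijective.comp (hZ A) using 1
    funext f
    simp [Adjunction.homEquiv_unit]

noncomputable def CategoryTheory.CostructuredArrow.isTerminalMkOfBijective {Z : C₁} {Y : C₂}
    (hZ : ∀ A, Function.Bijective fun f : A ⟶ Z => L.map f) (e : L.obj Z ≅ Y) :
    IsTerminal (CostructuredArrow.mk e.hom) :=
  let lift (g : CostructuredArrow L Y) := (Equiv.ofBijective _ (hZ g.left)).symm (g.hom ≫ e.inv)
  have map_lift (g : CostructuredArrow L Y) : L.map (lift g) = g.hom ≫ e.inv :=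
    Equiv.ofBijective_apply_symm_apply _ (hZ g.left) _
  IsTerminal.ofUniqueHom (fun g => CostructuredArrow.homMk (lift g) (by simp [map_lift]))
    fun g m => CostructuredArrow.hom_ext _ _ <| (hZ g.left).1 <| by
      simp [map_lift, ← CostructuredArrow.w m]

end Adjunction

namespace CEFibrant

open Localization.Construction

variable {C : Type u} [Category.{v} C] {S W : MorphismProperty C} {M : C}

lemma isInvertedBy_yoneda (hM : CEFibrant S W M) :
    W.IsInvertedBy (S.Q ⋙ (yoneda.obj (S.Q.obj M)).rightOp) := by
  intro Y X w hw
  rw [Functor.comp_map, Functor.rightOp_map, isIso_op_iff, isIso_iff_bijective]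
  exact Function.bijective_iff_existsUnique _ |>.2 (hM w hw)

variable (h : S.IsInvertedBy W.Q)

lemma lift_comp_lift_yoneda (hM : CEFibrant S W M) :
    lift W.Q h ⋙ lift _ hM.isInvertedBy_yoneda = (yoneda.obj (S.Q.obj M)).rightOp :=
  uniq _ _ (by rw [← Functor.assoc, fac, fac])

lemma map_injective (hM : CEFibrant S W M) (A : S.Localization) :
    Function.Injective fun f : A ⟶ S.Q.obj M => (lift W.Q h).map f := by
  intro f₁ f₂ hf
  have hH : (lift W.Q h ⋙ lift _ hM.isInvertedBy_yoneda).map f₁ =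
      (lift W.Q h ⋙ lift _ hM.isInvertedBy_yoneda).map f₂ :=
    congr_arg (lift _ hM.isInvertedBy_yoneda).map hf
  rw [lift_comp_lift_yoneda h hM] at hH
  simpa using congr_arg (fun φ => φ.unop (𝟙 (S.Q.obj M))) hH

lemma map_surjective (hM : CEFibrant S W M) (A : S.Localization) :
    Function.Surjective fun f : A ⟶ S.Q.obj M => (lift W.Q h).map f := by
  -- `P g`: precomposition with `g` preserves the maps into `L M` that come from `C[S⁻¹]`;
  -- for the formal inverses of `W` this is the lifting property of `M`.
  let P : MorphismProperty W.Localization := fun X Y g =>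
    ∀ b : S.Q.obj Y.as.obj ⟶ S.Q.obj M, ∃ a : S.Q.obj X.as.obj ⟶ S.Q.obj M,
      (lift W.Q h).map a = g ≫ (lift W.Q h).map b
  have : P.IsStableUnderComposition := ⟨fun g₁ g₂ hg₁ hg₂ b => by
    obtain ⟨a₂, ha₂⟩ := hg₂ b
    obtain ⟨a₁, ha₁⟩ := hg₁ a₂
    exact ⟨a₁, ha₁.trans ((congrArg (g₁ ≫ ·) ha₂).trans (Category.assoc _ _ _).symm)⟩⟩
  have hP : P = ⊤ := by
    refine morphismProperty_eq_top P (fun X Y u b => ⟨S.Q.map u ≫ b, (lift W.Q h).map_comp _ _⟩)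
      (fun X Y w hw b => ?_)
    obtain ⟨a, rfl, -⟩ := hM w hw b
    exact ⟨a, (Iso.eq_inv_comp (wIso w hw)).2 ((lift W.Q h).map_comp (S.Q.map w) a).symm⟩
  obtain ⟨⟨X⟩⟩ := A
  intro g
  obtain ⟨a, ha⟩ := (hP ▸ MorphismProperty.top_apply g : P g) (𝟙 _)
  exact ⟨a, ha.trans ((congrArg (g ≫ ·) ((lift W.Q h).map_id _)).trans (Category.comp_id g))⟩

lemma map_bijective (hM : CEFibrant S W M) (A : S.Localization) :
    Function.Bijective fun f : A ⟶ S.Q.obj M => (lift W.Q h).map f :=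
  ⟨hM.map_injective h A, hM.map_surjective h A⟩

end CEFibrant

lemma isLeftAdjoint_lift_of_hasCEFibrantModels {C : Type u} [Category.{v} C]
    {S W : MorphismProperty C} (h : S.IsInvertedBy W.Q)
    (hCE : ∀ X : C, ∃ (M : C) (w : S.Q.obj X ⟶ S.Q.obj M),
      CEFibrant S W M ∧ IsIso ((Localization.Construction.lift W.Q h).map w)) :
    (Localization.Construction.lift W.Q h).IsLeftAdjoint := by
  refine isLeftAdjoint_iff_hasTerminal_costructuredArrow.2 ?_
  rintro ⟨⟨X⟩⟩
  obtain ⟨M, w, hM, hw⟩ := hCE X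
  exact (CostructuredArrow.isTerminalMkOfBijective (hM.map_bijective h)
    (asIso ((Localization.Construction.lift W.Q h).map w)).symm).hasTerminal

/-- in a right Cartan–Eilenberg category `(C, S, W)`, any functor `F : C ⥤ D`
inverting the strong equivalences `S` admits a right derived functor
`RF : C[W⁻¹] ⥤ D`, namely an absolute left Kan extension of the induced functor
`F' : C[S⁻¹] ⥤ D` along the canonical functor `L : C[S⁻¹] ⥤ C[W⁻¹]`, whose value on an
object `X` is (isomorphic to) `F(M)` for any CE-fibrant model `X ⟶ M`. -/
theorem derived_functor_exists_CE
    {C : Type u} [Category.{v} C] (S W : MorphismProperty C)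
    (h : S.IsInvertedBy W.Q)
    (hCE : ∀ X : C, ∃ (M : C) (w : S.Q.obj X ⟶ S.Q.obj M),
      CEFibrant S W M ∧ IsIso ((Localization.Construction.lift W.Q h).map w))
    {D : Type u'} [Category.{v'} D] (F : C ⥤ D) (hF : S.IsInvertedBy F) :
    ∃ (RF : W.Localization ⥤ D)
      (α : Localization.Construction.lift F hF ⟶ Localization.Construction.lift W.Q h ⋙ RF),
      RF.IsLeftKanExtension α ∧
      (∀ {E : Type u''} [Category.{v''} E] (G : D ⥤ E),
        (RF ⋙ G).IsLeftKanExtension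
          (CategoryTheory.Functor.whiskerRight α G ≫
            (Functor.associator (Localization.Construction.lift W.Q h) RF G).hom)) ∧
      (∀ (X M : C) (w : S.Q.obj X ⟶ S.Q.obj M), CEFibrant S W M →
        IsIso ((Localization.Construction.lift W.Q h).map w) →
        Nonempty (RF.obj (W.Q.obj X) ≅ F.obj M)) := by
  let L := Localization.Construction.lift W.Q h
  let F' := Localization.Construction.lift F hF
  have := isLeftAdjoint_lift_of_hasCEFibrantModels h hCE
  let adj : L ⊣ L.rightAdjoint := Adjunction.ofIsLeftAdjoint L
  refine ⟨L.rightAdjoint ⋙ F', Functor.whiskerRight adj.unit F',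
    adj.isLeftKanExtension_comp F' _ fun _ => rfl,
    fun G => adj.isLeftKanExtension_comp (F' ⋙ G) _ fun _ => by simp,
    fun X M w hM hw => ?_⟩
  have := adj.isIso_unit_app_of_bijective (hM.map_bijective h)
  exact ⟨F'.mapIso (L.rightAdjoint.mapIso (asIso (L.map w)) ≪≫ (asIso (adj.unit.app _)).symm)⟩
end

section
/- Let R : C → C be a functor with natural transformations ρ : id → R and σ : R² → R satisfying σ ∘ ρ_R = id (ρ_R denotes ρ at R(X)), and suppose R sends a class W of morphisms into a class S of isomorphisms after localization, with ρ_{R(X)} an isomorphism in C[S⁻¹] for all X. Then every object of the form R(F) has the unique right lifting property in C[S⁻¹] against all morphisms of W: given w : G → G' in W and f : G → R(F) in C[S⁻¹], the morphism g = σ_F ∘ R(f) ∘ R(w)⁻¹ ∘ ρ_{G'} is the unique morphism with g ∘ w = f in C[S⁻¹]. -/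
open CategoryTheory

universe v u

/-
Every morphism `u : X ⟶ R Y` factors as `u = ρ_X ≫ R u ≫ σ_Y`: by naturality of `ρ` the right-hand
side is `u ≫ ρ_{R Y} ≫ σ_Y = u`. Since `R w` is invertible, `R` turns the lifting problem into
one with a unique solution, and this factorization transports it back.
-/

namespace CategoryTheory

section RetractionLifting

variable {D : Type*} [Category D] {R : D ⥤ D} (ρ : 𝟭 D ⟶ R) (σ : R ⋙ R ⟶ R)
  (hσρ : ∀ X : D, ρ.app (R.obj X) ≫ σ.app X = 𝟙 (R.obj X))

include hσρ

lemma app_comp_map_comp_app_eq {X Y : D} (u : X ⟶ R.obj Y) :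
    ρ.app X ≫ R.map u ≫ σ.app Y = u := by
  have hnat : u ≫ ρ.app (R.obj Y) = ρ.app X ≫ R.map u := ρ.naturality u
  rw [← Category.assoc, ← hnat, Category.assoc, hσρ, Category.comp_id]

lemma comp_lift_eq {A B Y : D} (w : A ⟶ B) [IsIso (R.map w)] (f : A ⟶ R.obj Y) :
    w ≫ (ρ.app B ≫ inv (R.map w) ≫ R.map f ≫ σ.app Y) = f := by
  have hnat : w ≫ ρ.app B = ρ.app A ≫ R.map w := ρ.naturality w
  rw [← Category.assoc, hnat, Category.assoc, IsIso.hom_inv_id_assoc,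
    app_comp_map_comp_app_eq ρ σ hσρ]

lemma eq_lift_of_comp_eq {A B Y : D} (w : A ⟶ B) [IsIso (R.map w)] (f : A ⟶ R.obj Y)
    (g : B ⟶ R.obj Y) (hg : w ≫ g = f) :
    g = ρ.app B ≫ inv (R.map w) ≫ R.map f ≫ σ.app Y := by
  rw [← hg, R.map_comp, Category.assoc, IsIso.inv_hom_id_assoc,
    app_comp_map_comp_app_eq ρ σ hσρ]

end RetractionLifting

end CategoryTheory

theorem unique_lifting_for_R_objects_general
    {C : Type u} [Category.{v} C] (S W : MorphismProperty C)
    (R : S.Localization ⥤ S.Localization)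
    (ρ : 𝟭 S.Localization ⟶ R) (σ : R ⋙ R ⟶ R)
    (hσρ : ∀ X : S.Localization, ρ.app (R.obj X) ≫ σ.app X = 𝟙 (R.obj X))
    (hRW : ∀ ⦃X Y : C⦄ (w : X ⟶ Y), W w → IsIso (R.map (S.Q.map w)))
    {G G' : C} (w : G ⟶ G') (hw : W w) (F : C)
    (f : S.Q.obj G ⟶ R.obj (S.Q.obj F)) :
    (S.Q.map w ≫
        (ρ.app (S.Q.obj G') ≫ (@inv _ _ _ _ (R.map (S.Q.map w)) (hRW w hw)) ≫ R.map f ≫ σ.app (S.Q.obj F)) = f) ∧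
    (∀ g' : S.Q.obj G' ⟶ R.obj (S.Q.obj F), S.Q.map w ≫ g' = f →
      g' = ρ.app (S.Q.obj G') ≫ (@inv _ _ _ _ (R.map (S.Q.map w)) (hRW w hw)) ≫ R.map f ≫ σ.app (S.Q.obj F)) := by
  have := hRW w hw
  exact ⟨comp_lift_eq ρ σ hσρ _ f, eq_lift_of_comp_eq ρ σ hσρ _ f⟩

/-- abstract unique-lifting for objects of the form `R(F)`. Work in the
localized category `C[S⁻¹]` (where the endofunctor `R` lives, since `R(S) ⊆ S`).
Given `ρ : id → R` and `σ : R² → R` with `σ ∘ ρ_R = id`, such that `R` sends each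
`w ∈ W` to an isomorphism of `C[S⁻¹]` and `ρ_{R(X)}` is an isomorphism for all `X`,
every lifting problem given by `w : G ⟶ G'` in `W` and `f : G ⟶ R(F)` in `C[S⁻¹]` has
`g = σ_F ∘ R(f) ∘ R(w)⁻¹ ∘ ρ_{G'}` as its unique solution. -/
theorem unique_lifting_for_R_objects
    {C : Type u} [Category.{v} C] (S W : MorphismProperty C)
    (R : S.Localization ⥤ S.Localization)
    (ρ : 𝟭 S.Localization ⟶ R) (σ : R ⋙ R ⟶ R)
    (hσρ : ∀ X : S.Localization, ρ.app (R.obj X) ≫ σ.app X = 𝟙 (R.obj X))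
    (hRW : ∀ ⦃X Y : C⦄ (w : X ⟶ Y), W w → IsIso (R.map (S.Q.map w)))
    (hρR : ∀ X : S.Localization, IsIso (ρ.app (R.obj X)))
    {G G' : C} (w : G ⟶ G') (hw : W w) (F : C)
    (f : S.Q.obj G ⟶ R.obj (S.Q.obj F)) :
    (S.Q.map w ≫
        (ρ.app (S.Q.obj G') ≫ (@inv _ _ _ _ (R.map (S.Q.map w)) (hRW w hw)) ≫ R.map f ≫ σ.app (S.Q.obj F)) = f) ∧
    (∀ g' : S.Q.obj G' ⟶ R.obj (S.Q.obj F), S.Q.map w ≫ g' = f →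
      g' = ρ.app (S.Q.obj G') ≫ (@inv _ _ _ _ (R.map (S.Q.map w)) (hRW w hw)) ≫ R.map f ≫ σ.app (S.Q.obj F)) :=
  unique_lifting_for_R_objects_general S W R ρ σ hσρ hRW w hw F f
end
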